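/- arXiv:1801.00828 — 2 statements merged into one kernel-verified Lean document; each statement's English description precedes it below -/
import Mathlib

section
/- Let g ∈ H¹(a, b) with g(a) = 0, where a < b are real numbers. Then ∫_a^b |g(t)|² / (t−a)² dt ≤ 4 ∫_a^b |g'(t)|² dt. -/
/-!
Write `|g t| ≤ ∫_a^t |g'|`. Cauchy–Schwarz with the weight `(s - a)^(1/2)` gives
`g(t)² ≤ 2 (t - a)^(1/2) ∫_a^t (s - a)^(1/2) g'(s)² ds`. Dividing by `(t - a)²`, integrating
in `t` and exchanging the order of integration, the inner integral
`∫_s^b 2 (t - a)^(-3/2) dt ≤ 4 (s - a)^(-1/2)` cancels the weight and leaves `4 ∫_a^b g'²`.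
In `ℝ≥0∞` all of this holds without any integrability assumption on `g'`.
-/

open MeasureTheory Set
open scoped ENNReal

lemma lintegral_Ioo_rpow_sub {a s t r : ℝ} (has : a ≤ s) (hst : s ≤ t)
    (hr : -1 < r ∨ r ≠ -1 ∧ a < s) :
    ∫⁻ x in Ioo s t, ENNReal.ofReal ((x - a) ^ r)
      = ENNReal.ofReal (((t - a) ^ (r + 1) - (s - a) ^ (r + 1)) / (r + 1)) := by
  have hr' : -1 < r ∨ r ≠ -1 ∧ (0 : ℝ) ∉ uIcc (s - a) (t - a) := by
    refine hr.imp_right fun hr => ⟨hr.1, ?_⟩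
    rw [uIcc_of_le (by linarith)]
    exact fun h => by linarith [h.1, hr.2]
  have hint : IntervalIntegrable (fun x => (x - a) ^ r) volume s t := by
    have h : IntervalIntegrable (fun x => x ^ r) volume (s - a) (t - a) := by
      rcases hr' with hr | ⟨-, h0⟩
      · exact intervalIntegral.intervalIntegrable_rpow' hr
      · exact intervalIntegral.intervalIntegrable_rpow (Or.inr h0)
    simpa using h.comp_sub_right a
  rw [← ofReal_integral_eq_lintegral_ofReal
    ((intervalIntegrable_iff_integrableOn_Ioc_of_le hst).1 hint |>.mono_set Ioo_subset_Ioc_self)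
    ((ae_restrict_iff' measurableSet_Ioo).2 (.of_forall
      fun x hx => Real.rpow_nonneg (by linarith [hx.1]) r)),
    ← integral_Ioc_eq_integral_Ioo, ← intervalIntegral.integral_of_le hst,
    intervalIntegral.integral_comp_sub_right (fun x => x ^ r), integral_rpow hr']

lemma lintegral_Ioo_rpow_sub_le {a s t r : ℝ} (has : a < s) (hst : s ≤ t) (hr : r < -1) :
    ∫⁻ x in Ioo s t, ENNReal.ofReal ((x - a) ^ r)
      ≤ ENNReal.ofReal (-(s - a) ^ (r + 1) / (r + 1)) := by
  rw [lintegral_Ioo_rpow_sub has.le hst (Or.inr ⟨hr.ne, has⟩)]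
  refine ENNReal.ofReal_le_ofReal (div_le_div_of_nonpos_of_le (by linarith) ?_)
  linarith [Real.rpow_nonneg (by linarith : 0 ≤ t - a) (r + 1)]

lemma sq_lintegral_mul_le {α : Type*} [MeasurableSpace α] {μ : Measure α} {f g : α → ℝ≥0∞}
    (hf : AEMeasurable f μ) (hg : AEMeasurable g μ) :
    (∫⁻ x, f x * g x ∂μ) ^ 2 ≤ (∫⁻ x, f x ^ 2 ∂μ) * ∫⁻ x, g x ^ 2 ∂μ := by
  have h := ENNReal.lintegral_mul_le_Lp_mul_Lq μ Real.HolderConjugate.two_two hf hg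
  simp only [Pi.mul_apply, ENNReal.rpow_two] at h
  calc (∫⁻ x, f x * g x ∂μ) ^ 2
      ≤ ((∫⁻ x, f x ^ 2 ∂μ) ^ (1 / 2 : ℝ) * (∫⁻ x, g x ^ 2 ∂μ) ^ (1 / 2 : ℝ)) ^ 2 := by gcongr
    _ = (∫⁻ x, f x ^ 2 ∂μ) * ∫⁻ x, g x ^ 2 ∂μ := by
      rw [mul_pow, ← ENNReal.rpow_mul_natCast, ← ENNReal.rpow_mul_natCast]
      norm_num

lemma ofReal_rpow_sq {x : ℝ} (hx : 0 ≤ x) (r : ℝ) :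
    ENNReal.ofReal (x ^ r) ^ 2 = ENNReal.ofReal (x ^ (2 * r)) := by
  rw [← ENNReal.ofReal_pow (Real.rpow_nonneg hx r), mul_comm, ← Real.rpow_mul_natCast hx]
  norm_num

lemma sq_lintegral_Ioo_le {a t : ℝ} (hat : a ≤ t) {f : ℝ → ℝ≥0∞} (hf : AEMeasurable f) :
    (∫⁻ s in Ioo a t, f s) ^ 2 ≤ ENNReal.ofReal (2 * (t - a) ^ (1 / 2 : ℝ))
      * ∫⁻ s in Ioo a t, ENNReal.ofReal ((s - a) ^ (1 / 2 : ℝ)) * f s ^ 2 := by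
  set w : ℝ → ℝ≥0∞ := fun s => ENNReal.ofReal ((s - a) ^ (1 / 4 : ℝ))
  set v : ℝ → ℝ≥0∞ := fun s => ENNReal.ofReal ((s - a) ^ (-(1 / 4) : ℝ))
  have hw : Measurable w := by fun_prop
  have hv : Measurable v := by fun_prop
  have hf_eq : ∀ᵐ s ∂volume.restrict (Ioo a t), f s = v s * (w s * f s) := by
    refine (ae_restrict_iff' measurableSet_Ioo).2 (.of_forall fun s hs => ?_)
    have hsa : 0 < s - a := by linarith [hs.1]
    rw [← mul_assoc, ← ENNReal.ofReal_mul (by positivity), ← Real.rpow_add hsa]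
    norm_num
  have hv_sq : ∫⁻ s in Ioo a t, v s ^ 2 = ENNReal.ofReal (2 * (t - a) ^ (1 / 2 : ℝ)) := by
    rw [setLIntegral_congr_fun measurableSet_Ioo fun s hs => ofReal_rpow_sq (by linarith [hs.1]) _,
      lintegral_Ioo_rpow_sub le_rfl hat (Or.inl (by norm_num))]
    congr 1
    norm_num
    ring
  calc (∫⁻ s in Ioo a t, f s) ^ 2
      = (∫⁻ s in Ioo a t, v s * (w s * f s)) ^ 2 := by rw [lintegral_congr_ae hf_eq]
    _ ≤ (∫⁻ s in Ioo a t, v s ^ 2) * ∫⁻ s in Ioo a t, (w s * f s) ^ 2 :=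
      sq_lintegral_mul_le hv.aemeasurable (hw.aemeasurable.mul hf).restrict
    _ = _ := by
      rw [hv_sq]
      congr 1
      refine setLIntegral_congr_fun measurableSet_Ioo fun s hs => ?_
      rw [mul_pow, ofReal_rpow_sq (by linarith [hs.1])]
      norm_num

lemma lintegral_Ioo_mul_lintegral_Ioo {μ : Measure ℝ} [SFinite μ] {a b : ℝ} {c h : ℝ → ℝ≥0∞}
    (hc : Measurable c) (hh : Measurable h) :
    ∫⁻ t in Ioo a b, c t * ∫⁻ s in Ioo a t, h s ∂μ ∂μ
      = ∫⁻ s in Ioo a b, (∫⁻ t in Ioo s b, c t ∂μ) * h s ∂μ := by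
  set F : ℝ → ℝ → ℝ≥0∞ := fun t s => if s < t then c t * h s else 0
  have hF : Measurable (Function.uncurry F) :=
    Measurable.ite (measurableSet_lt measurable_snd measurable_fst)
      ((hc.comp measurable_fst).mul (hh.comp measurable_snd)) measurable_const
  calc ∫⁻ t in Ioo a b, c t * ∫⁻ s in Ioo a t, h s ∂μ ∂μ
      = ∫⁻ t in Ioo a b, ∫⁻ s in Ioo a b, F t s ∂μ ∂μ := by
        refine setLIntegral_congr_fun measurableSet_Ioo fun t ht => ?_
        have hF_t : F t = (Iio t).indicator fun s => c t * h s := by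
          ext s; simp [F, indicator_apply]
        rw [hF_t, lintegral_indicator measurableSet_Iio, Measure.restrict_restrict measurableSet_Iio,
          Iio_inter_Ioo, min_eq_left ht.2.le, lintegral_const_mul _ hh]
    _ = ∫⁻ s in Ioo a b, ∫⁻ t in Ioo a b, F t s ∂μ ∂μ := lintegral_lintegral_swap hF.aemeasurable
    _ = ∫⁻ s in Ioo a b, (∫⁻ t in Ioo s b, c t ∂μ) * h s ∂μ := by
        refine setLIntegral_congr_fun measurableSet_Ioo fun s hs => ?_
        have hF_s : (fun t => F t s) = (Ioi s).indicator fun t => c t * h s := by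
          ext t; simp [F, indicator_apply]
        rw [hF_s, lintegral_indicator measurableSet_Ioi, Measure.restrict_restrict measurableSet_Ioi,
          Ioi_inter_Ioo, max_eq_left hs.1.le, lintegral_mul_const _ hc]

theorem lintegral_sq_lintegral_Ioo_div_le {a b : ℝ} {f : ℝ → ℝ≥0∞} (hf : Measurable f) :
    ∫⁻ t in Ioo a b, (∫⁻ s in Ioo a t, f s) ^ 2 / ENNReal.ofReal ((t - a) ^ 2)
      ≤ 4 * ∫⁻ t in Ioo a b, f t ^ 2 := by
  set c : ℝ → ℝ≥0∞ := fun t => ENNReal.ofReal (2 * (t - a) ^ (-(3 / 2) : ℝ))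
  set h : ℝ → ℝ≥0∞ := fun s => ENNReal.ofReal ((s - a) ^ (1 / 2 : ℝ)) * f s ^ 2
  have hc : Measurable c := by fun_prop
  have hh : Measurable h := by fun_prop
  have h_inner : ∀ t ∈ Ioo a b,
      (∫⁻ s in Ioo a t, f s) ^ 2 / ENNReal.ofReal ((t - a) ^ 2) ≤ c t * ∫⁻ s in Ioo a t, h s := by
    intro t ht
    have hta : 0 < t - a := by linarith [ht.1]
    calc (∫⁻ s in Ioo a t, f s) ^ 2 / ENNReal.ofReal ((t - a) ^ 2)
        ≤ ENNReal.ofReal (2 * (t - a) ^ (1 / 2 : ℝ)) * (∫⁻ s in Ioo a t, h s)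
            / ENNReal.ofReal ((t - a) ^ 2) := by
          gcongr
          exact sq_lintegral_Ioo_le ht.1.le hf.aemeasurable
      _ = c t * ∫⁻ s in Ioo a t, h s := by
          rw [div_eq_mul_inv, mul_right_comm, ← div_eq_mul_inv,
            ← ENNReal.ofReal_div_of_pos (by positivity)]
          congr 2
          rw [mul_div_assoc, ← Real.rpow_natCast, ← Real.rpow_sub hta]
          norm_num
  have h_outer : ∀ s ∈ Ioo a b, (∫⁻ t in Ioo s b, c t) * h s ≤ 4 * f s ^ 2 := by
    intro s hs
    have hsa : 0 < s - a := by linarith [hs.1]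
    have hc_int : ∫⁻ t in Ioo s b, c t ≤ ENNReal.ofReal (4 * (s - a) ^ (-(1 / 2) : ℝ)) :=
      calc ∫⁻ t in Ioo s b, c t
          = ENNReal.ofReal 2 * ∫⁻ t in Ioo s b, ENNReal.ofReal ((t - a) ^ (-(3 / 2) : ℝ)) := by
            simp_rw [c, ENNReal.ofReal_mul zero_le_two]
            exact lintegral_const_mul _ (by fun_prop)
        _ ≤ ENNReal.ofReal 2 * ENNReal.ofReal (-(s - a) ^ (-(3 / 2) + 1 : ℝ) / (-(3 / 2) + 1)) := by
            gcongr
            exact lintegral_Ioo_rpow_sub_le hs.1 hs.2.le (by norm_num)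
        _ = ENNReal.ofReal (4 * (s - a) ^ (-(1 / 2) : ℝ)) := by
            rw [← ENNReal.ofReal_mul zero_le_two]
            congr 1
            norm_num
            ring
    calc (∫⁻ t in Ioo s b, c t) * h s
        ≤ ENNReal.ofReal (4 * (s - a) ^ (-(1 / 2) : ℝ)) * h s := by gcongr
      _ = 4 * f s ^ 2 := by
          rw [← mul_assoc, ← ENNReal.ofReal_mul (by positivity), mul_assoc, ← Real.rpow_add hsa]
          norm_num
  calc ∫⁻ t in Ioo a b, (∫⁻ s in Ioo a t, f s) ^ 2 / ENNReal.ofReal ((t - a) ^ 2)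
      ≤ ∫⁻ t in Ioo a b, c t * ∫⁻ s in Ioo a t, h s := setLIntegral_mono' measurableSet_Ioo h_inner
    _ = ∫⁻ s in Ioo a b, (∫⁻ t in Ioo s b, c t) * h s := lintegral_Ioo_mul_lintegral_Ioo hc hh
    _ ≤ ∫⁻ s in Ioo a b, 4 * f s ^ 2 := setLIntegral_mono' measurableSet_Ioo h_outer
    _ = 4 * ∫⁻ t in Ioo a b, f t ^ 2 := lintegral_const_mul _ (hf.pow_const 2)

lemma enorm_sub_le_lintegral_enorm_deriv {g : ℝ → ℝ} {a t : ℝ} (hat : a ≤ t)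
    (hg : ContinuousOn g (Icc a t)) (hg' : ∀ x ∈ Ioo a t, DifferentiableAt ℝ g x) :
    ‖g t - g a‖ₑ ≤ ∫⁻ s in Ioo a t, ‖deriv g s‖ₑ := by
  by_cases hfin : ∫⁻ s in Ioo a t, ‖deriv g s‖ₑ = ∞
  · exact hfin ▸ le_top
  have hint : IntegrableOn (deriv g) (Ioo a t) :=
    ⟨(measurable_deriv g).aestronglyMeasurable, lt_top_iff_ne_top.2 hfin⟩
  have hFTC := intervalIntegral.integral_eq_sub_of_hasDeriv_right_of_le hat hg
    (fun x hx => (hg' x hx).hasDerivAt.hasDerivWithinAt)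
    ((intervalIntegrable_iff_integrableOn_Ioo_of_le hat).2 hint)
  rw [← hFTC, intervalIntegral.integral_of_le hat, integral_Ioc_eq_integral_Ioo]
  exact enorm_integral_le_lintegral_enorm _

lemma ofReal_sq_eq_enorm_sq (x : ℝ) : ENNReal.ofReal (x ^ 2) = ‖x‖ₑ ^ 2 := by
  rw [Real.enorm_eq_ofReal_abs, ← ENNReal.ofReal_pow (abs_nonneg x), sq_abs]

theorem stmt2_general (a b : ℝ) (g : ℝ → ℝ)
    (hg : ContinuousOn g (Icc a b))
    (hg' : ∀ t ∈ Ioo a b, DifferentiableAt ℝ g t)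
    (h0 : g a = 0) :
    ∫⁻ t in Ioo a b, ENNReal.ofReal (g t ^ 2 / (t - a) ^ 2)
      ≤ 4 * ∫⁻ t in Ioo a b, ENNReal.ofReal (deriv g t ^ 2) := by
  have h_pointwise : ∀ t ∈ Ioo a b, ENNReal.ofReal (g t ^ 2 / (t - a) ^ 2)
      ≤ (∫⁻ s in Ioo a t, ‖deriv g s‖ₑ) ^ 2 / ENNReal.ofReal ((t - a) ^ 2) := by
    intro t ht
    have hg_t : ‖g t‖ₑ ≤ ∫⁻ s in Ioo a t, ‖deriv g s‖ₑ := by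
      simpa [h0] using enorm_sub_le_lintegral_enorm_deriv ht.1.le
        (hg.mono (Icc_subset_Icc_right ht.2.le)) fun x hx => hg' x ⟨hx.1, hx.2.trans ht.2⟩
    rw [ENNReal.ofReal_div_of_pos (pow_pos (sub_pos.2 ht.1) 2), ofReal_sq_eq_enorm_sq]
    gcongr
  calc ∫⁻ t in Ioo a b, ENNReal.ofReal (g t ^ 2 / (t - a) ^ 2)
      ≤ ∫⁻ t in Ioo a b, (∫⁻ s in Ioo a t, ‖deriv g s‖ₑ) ^ 2 / ENNReal.ofReal ((t - a) ^ 2) :=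
        setLIntegral_mono' measurableSet_Ioo h_pointwise
    _ ≤ 4 * ∫⁻ t in Ioo a b, ‖deriv g t‖ₑ ^ 2 :=
        lintegral_sq_lintegral_Ioo_div_le (measurable_deriv g).enorm
    _ = 4 * ∫⁻ t in Ioo a b, ENNReal.ofReal (deriv g t ^ 2) := by
        simp_rw [ofReal_sq_eq_enorm_sq]

/-- One-dimensional Hardy inequality on a bounded interval:
if `g ∈ H¹(a,b)` with `g(a) = 0`, then
`∫_a^b |g(t)|²/(t-a)² dt ≤ 4 ∫_a^b |g'(t)|² dt`. -/
theorem stmt2 (a b : ℝ) (hab : a < b) (g : ℝ → ℝ)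
    (hg : ContinuousOn g (Icc a b))
    (hg' : ∀ t ∈ Ioo a b, DifferentiableAt ℝ g t)
    (h0 : g a = 0) :
    ∫⁻ t in Ioo a b, ENNReal.ofReal (g t ^ 2 / (t - a) ^ 2)
      ≤ 4 * ∫⁻ t in Ioo a b, ENNReal.ofReal (deriv g t ^ 2) :=
  stmt2_general a b g hg hg' h0
end

section
/- Let q > 2, d ≥ 2, and let I : (0,1] → [1, ∞) be a function such that I(s) ≥ c·I(1/2) for s ∈ (1/2,1), with c > 0, satisfying, for all 0 < s < t < 1, I(s) ≤ C s^{(1−d)/q} t^{(d−1)(1/2−θ)} (t−s)^{(d−1)(1/q−1/2)} I(t)^{1−θ}, where θ ∈ (0,1) is defined by 1/2 = (1−θ)/q + θ. Then I(1/2) ≤ C', with C' depending only on C, c, d, q, θ. -/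
open Set
noncomputable section

set_option maxHeartbeats 1000000

private def rr (n : ℕ) : ℝ := 5/8 - (8 * 2^n : ℝ)⁻¹


lemma h2n0 (n : ℕ) : (0:ℝ) < 2^n := by positivity
lemma h2n1 (n : ℕ) : (1:ℝ) ≤ 2^n := one_le_pow₀ one_le_two

lemma rr12 (n : ℕ) : (1:ℝ)/2 ≤ rr n := by
  unfold rr
  have h1 : ((8:ℝ) * 2^n)⁻¹ ≤ 1/8 := by
    rw [inv_eq_one_div]
    apply div_le_div_of_nonneg_left (by norm_num) (by norm_num)
    nlinarith [h2n1 n]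
  linarith

lemma rr58 (n : ℕ) : rr n < 5/8 := by
  unfold rr
  have : (0:ℝ) < (8 * 2^n : ℝ)⁻¹ := by positivity
  linarith

lemma rrsucc (n : ℕ) : rr (n+1) = rr n + (16 * 2^n : ℝ)⁻¹ := by
  unfold rr
  have h := (h2n0 n).ne'
  rw [pow_succ]
  field_simp
  ring

def mm (J : ℝ → ℝ) (n : ℕ) : ℝ := sInf (J '' Ico (rr n) 1)

lemma aux_iter (θ A B δ : ℝ) (hθ0 : 0 < θ) (hθ1 : θ < 1) (hB : 0 ≤ B)
    (hδ1 : 1 ≤ δ) (hθδ : B * Real.log 2 + θ ≤ θ * δ)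
    (J : ℝ → ℝ)
    (hJ0 : ∀ t : ℝ, 1/2 ≤ t → t < 1 → 0 ≤ J t)
    (hmain : ∀ s t : ℝ, 1/2 ≤ s → s < t → t < 1 →
      J s ≤ A + B * Real.log (1/(t-s)) + (1-θ) * J t) :
    sInf (J '' Ico (1/2 : ℝ) 1) ≤ (A + B * Real.log 2 * 4 + δ) / θ := by
  classical
  have hL0 : 0 ≤ Real.log 2 := Real.log_nonneg one_le_two
  have hne : ∀ n, (J '' Ico (rr n) 1).Nonempty := by
    intro n
    exact ⟨J (rr n), rr n, ⟨le_refl _, by linarith [rr58 n]⟩, rfl⟩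
  have hbdd : ∀ n, BddBelow (J '' Ico (rr n) 1) := by
    intro n
    refine ⟨0, ?_⟩
    rintro x ⟨t, ⟨ht1, ht2⟩, rfl⟩
    exact hJ0 t (le_trans (rr12 n) ht1) ht2
  have hmle : ∀ n (t : ℝ), rr n ≤ t → t < 1 → mm J n ≤ J t := by
    intro n t h1 h2
    exact csInf_le (hbdd n) ⟨t, ⟨h1, h2⟩, rfl⟩
  -- existence of a good stage
  have hex : ∃ n : ℕ, ∃ t : ℝ, (rr (n+1) ≤ t ∧ t < 1) ∧ J t ≤ mm J n + δ := by
    by_contra hno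
    push_neg at hno
    have hstep : ∀ n, mm J n + δ ≤ mm J (n+1) := by
      intro n
      apply le_csInf (hne (n+1))
      rintro x ⟨t, ⟨ht1, ht2⟩, rfl⟩
      exact (hno n t ⟨ht1, ht2⟩).le
    have hgrow : ∀ n : ℕ, mm J 0 + n * δ ≤ mm J n := by
      intro n
      induction n with
      | zero => simp
      | succ k ih =>
        have := hstep k
        push_cast
        push_cast at ih
        linarith
    obtain ⟨n, hn⟩ := exists_nat_gt (J (7/8) - mm J 0)
    have h1 : mm J n ≤ J (7/8) := hmle n (7/8) (by linarith [rr58 n]) (by norm_num)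
    have h2 : (n:ℝ) ≤ (n:ℝ) * δ := le_mul_of_one_le_right (Nat.cast_nonneg n) hδ1
    have := hgrow n
    linarith
  set N := Nat.find hex with hN
  obtain ⟨t₀, ⟨ht1, ht2⟩, ht3⟩ := Nat.find_spec hex
  rw [← hN] at ht1 ht3
  have hbad : ∀ n, n < N → ∀ t : ℝ, rr (n+1) ≤ t → t < 1 → mm J n + δ < J t := by
    intro n hn t ha hb
    by_contra hcon
    push_neg at hcon
    exact Nat.find_min hex hn ⟨t, ⟨ha, hb⟩, hcon⟩
  have hgrow2 : ∀ n, n ≤ N → mm J 0 + n * δ ≤ mm J n := by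
    intro n hn
    induction n with
    | zero => simp
    | succ k ih =>
      have hkN : k < N := Nat.lt_of_succ_le hn
      have ihk := ih (le_of_lt hkN)
      have hstep : mm J k + δ ≤ mm J (k+1) := by
        apply le_csInf (hne (k+1))
        rintro x ⟨t, ⟨h1, h2⟩, rfl⟩
        exact (hbad k hkN t h1 h2).le
      push_cast
      push_cast at ihk
      linarith
  have hmN : mm J 0 + (N:ℝ) * δ ≤ mm J N := hgrow2 N le_rfl
  -- the good stage estimate
  have hg0 : (0:ℝ) < (16 * 2^N : ℝ)⁻¹ := by positivity
  have hrNs : rr N ≤ t₀ - (16 * 2^N : ℝ)⁻¹ := by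
    have := rrsucc N
    linarith
  have hs12 : (1:ℝ)/2 ≤ t₀ - (16 * 2^N : ℝ)⁻¹ := le_trans (rr12 N) hrNs
  have hst : t₀ - (16 * 2^N : ℝ)⁻¹ < t₀ := by linarith
  have hmain' := hmain (t₀ - (16 * 2^N : ℝ)⁻¹) t₀ hs12 hst ht2
  have hlogg : Real.log (1/(t₀ - (t₀ - (16 * 2^N : ℝ)⁻¹))) = ((N:ℝ) + 4) * Real.log 2 := by
    have h16 : (1:ℝ)/(t₀ - (t₀ - (16 * 2^N : ℝ)⁻¹)) = 2^(N+4) := by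
      rw [show t₀ - (t₀ - (16 * 2^N : ℝ)⁻¹) = (16 * 2^N : ℝ)⁻¹ by ring]
      rw [one_div, inv_inv, pow_add]
      norm_num
      ring
    rw [h16, Real.log_pow]
    push_cast
    ring
  rw [hlogg] at hmain'
  have hJs : mm J N ≤ J (t₀ - (16 * 2^N : ℝ)⁻¹) :=
    hmle N _ hrNs (by linarith)
  have hkey : θ * mm J N ≤ A + B * (((N:ℝ) + 4) * Real.log 2) + (1-θ) * δ := by
    have h1θ : (0:ℝ) ≤ 1 - θ := by linarith
    have h2' : (1-θ) * J t₀ ≤ (1-θ) * (mm J N + δ) :=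
      mul_le_mul_of_nonneg_left ht3 h1θ
    nlinarith [hJs, hmain']
  have hr0 : rr 0 = 1/2 := by norm_num [rr]
  have hfinal : mm J 0 ≤ (A + B * Real.log 2 * 4 + δ) / θ := by
    rw [le_div_iff₀ hθ0]
    have hNnn : (0:ℝ) ≤ (N:ℝ) := Nat.cast_nonneg N
    have h2' : θ * (mm J 0 + (N:ℝ) * δ) ≤ θ * mm J N :=
      mul_le_mul_of_nonneg_left hmN hθ0.le
    nlinarith [hkey, hθ0.le, mul_le_mul_of_nonneg_left hθδ hNnn]
  calc sInf (J '' Ico (1/2 : ℝ) 1) = mm J 0 := by rw [mm, hr0]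
    _ ≤ (A + B * Real.log 2 * 4 + δ) / θ := hfinal


/-- abstract convexity/iteration lemma.  If `I : (0,1] → [1,∞)` satisfies
`I(s) ≥ c·I(1/2)` for `s ∈ (1/2,1)` and, for all `0 < s < t < 1`,
`I(s) ≤ C s^{(1-d)/q} t^{(d-1)(1/2-θ)} (t-s)^{(d-1)(1/q-1/2)} I(t)^{1-θ}`, where
`θ ∈ (0,1)` is defined by `1/2 = (1-θ)/q + θ`, then `I(1/2) ≤ C'` with `C'` depending
only on `C`, `c`, `d`, `q`, `θ`. -/
theorem stmt12 (d : ℕ) (hd : 2 ≤ d) (q : ℝ) (hq : 2 < q) (θ : ℝ) (hθ : θ ∈ Ioo (0:ℝ) 1)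
    (hθq : (1:ℝ)/2 = (1-θ)/q + θ) (C c : ℝ) (hC : 0 < C) (hc : 0 < c) :
    ∃ C' : ℝ, ∀ I : ℝ → ℝ,
      (∀ s ∈ Ioc (0:ℝ) 1, 1 ≤ I s) →
      (∀ s ∈ Ioo (1/2 : ℝ) 1, c * I (1/2) ≤ I s) →
      (∀ s t : ℝ, 0 < s → s < t → t < 1 →
        I s ≤ C * s ^ ((1-(d:ℝ))/q) * t ^ (((d:ℝ)-1)*(1/2-θ))
              * (t-s) ^ (((d:ℝ)-1)*(1/q-1/2)) * I t ^ (1-θ)) →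
      I (1/2) ≤ C' := by
  obtain ⟨hθ0, hθ1⟩ := hθ
  have hq0 : (0:ℝ) < q := by linarith
  have hd1 : (1:ℝ) ≤ (d:ℝ) - 1 := by
    have : (2:ℝ) ≤ (d:ℝ) := by exact_mod_cast hd
    linarith
  have hL0 : 0 ≤ Real.log 2 := Real.log_nonneg one_le_two
  have hq12 : 1/q < 1/2 := one_div_lt_one_div_of_lt (by norm_num) hq
  
  have hθhalf : 1/2 - θ = (1-θ)/q := by linarith
  have hθhalfpos : (0:ℝ) ≤ 1/2 - θ := by
    rw [hθhalf]; exact div_nonneg (by linarith) hq0.le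
  obtain ⟨A, hA⟩ : ∃ A : ℝ, A = Real.log C + ((d:ℝ)-1)/q * Real.log 2 := ⟨_, rfl⟩
  obtain ⟨B, hB⟩ : ∃ B : ℝ, B = ((d:ℝ)-1) * (1/2 - 1/q) := ⟨_, rfl⟩
  have hBnn : 0 ≤ B := hB ▸ mul_nonneg (by linarith) (by linarith)
  obtain ⟨δ, hδdef⟩ : ∃ δ : ℝ, δ = B * Real.log 2 / θ + 1 := ⟨_, rfl⟩
  have hδ1 : 1 ≤ δ := by
    have : 0 ≤ B * Real.log 2 / θ := div_nonneg (mul_nonneg hBnn hL0) hθ0.le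
    rw [hδdef]; linarith
  have hθδ : B * Real.log 2 + θ ≤ θ * δ := by
    rw [hδdef]
    rw [mul_add, mul_one, mul_div_cancel₀ _ hθ0.ne']
  refine ⟨Real.exp ((A + B * Real.log 2 * 4 + δ) / θ - Real.log (min c 1)), ?_⟩
  intro I h1 h2 h3
  have hI12 : 1 ≤ I (1/2) := h1 (1/2) ⟨by norm_num, by norm_num⟩
  have hJ0 : ∀ t : ℝ, 1/2 ≤ t → t < 1 → 0 ≤ Real.log (I t) := by
    intro t hta htb
    exact Real.log_nonneg (h1 t ⟨by linarith, by linarith⟩)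
  have hmain : ∀ s t : ℝ, 1/2 ≤ s → s < t → t < 1 →
      Real.log (I s) ≤ A + B * Real.log (1/(t-s)) + (1-θ) * Real.log (I t) := by
    intro s t hs hst ht1
    have hs0 : 0 < s := by linarith
    have ht0 : 0 < t := by linarith
    have hts0 : 0 < t - s := by linarith
    have hIt : 1 ≤ I t := h1 t ⟨ht0, ht1.le⟩
    have hIt0 : 0 < I t := by linarith
    have hIs : 1 ≤ I s := h1 s ⟨hs0, by linarith⟩
    have h := h3 s t hs0 hst ht1
    have hlog := Real.log_le_log (by linarith : (0:ℝ) < I s) h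
    have p1 : 0 < s ^ ((1-(d:ℝ))/q) := Real.rpow_pos_of_pos hs0 _
    have p2 : 0 < t ^ (((d:ℝ)-1)*(1/2-θ)) := Real.rpow_pos_of_pos ht0 _
    have p3 : 0 < (t-s) ^ (((d:ℝ)-1)*(1/q-1/2)) := Real.rpow_pos_of_pos hts0 _
    have p4 : 0 < I t ^ (1-θ) := Real.rpow_pos_of_pos hIt0 _
    rw [Real.log_mul (mul_pos (mul_pos (mul_pos hC p1) p2) p3).ne' p4.ne',
        Real.log_mul (mul_pos (mul_pos hC p1) p2).ne' p3.ne',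
        Real.log_mul (mul_pos hC p1).ne' p2.ne',
        Real.log_mul hC.ne' p1.ne',
        Real.log_rpow hs0, Real.log_rpow ht0, Real.log_rpow hts0,
        Real.log_rpow hIt0] at hlog
    have hlogs : -Real.log 2 ≤ Real.log s := by
      have h' : Real.log (1/2 : ℝ) ≤ Real.log s := Real.log_le_log (by norm_num) hs
      rw [Real.log_div one_ne_zero two_ne_zero, Real.log_one] at h'
      linarith
    have hterm1 : (1-(d:ℝ))/q * Real.log s ≤ ((d:ℝ)-1)/q * Real.log 2 := by
      have h1' : (1-(d:ℝ))/q = -(((d:ℝ)-1)/q) := by ring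
      have hcoef : 0 ≤ ((d:ℝ)-1)/q := by positivity
      rw [h1']
      nlinarith [hlogs]
    have hterm2 : ((d:ℝ)-1)*(1/2-θ) * Real.log t ≤ 0 := by
      apply mul_nonpos_of_nonneg_of_nonpos
      · exact mul_nonneg (by linarith) hθhalfpos
      · exact Real.log_nonpos ht0.le ht1.le
    have hterm3 : ((d:ℝ)-1)*(1/q-1/2) * Real.log (t-s)
        = B * Real.log (1/(t-s)) := by
      rw [Real.log_div one_ne_zero hts0.ne', Real.log_one, hB]
      ring
    rw [hterm3] at hlog
    rw [hA]
    linarith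
  have haux := aux_iter θ A B δ hθ0 hθ1 hBnn hδ1 hθδ
    (fun t => Real.log (I t)) hJ0 hmain
  have hcmin : 0 < min c 1 := lt_min hc one_pos
  have hlow : Real.log (min c 1) + Real.log (I (1/2))
      ≤ sInf ((fun t => Real.log (I t)) '' Ico (1/2 : ℝ) 1) := by
    have hmem : Real.log (I (1/2)) ∈ (fun t => Real.log (I t)) '' Ico (1/2:ℝ) 1 :=
      ⟨1/2, ⟨le_refl _, by norm_num⟩, rfl⟩
    apply le_csInf ⟨_, hmem⟩
    rintro x ⟨t, ⟨hta, htb⟩, rfl⟩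
    rcases eq_or_lt_of_le hta with h | h
    · rw [← h]
      have : Real.log (min c 1) ≤ 0 :=
        Real.log_nonpos hcmin.le (min_le_right c 1)
      simp only []
      linarith
    · have hIt := h2 t ⟨h, htb⟩
      have hprod : min c 1 * I (1/2) ≤ I t := by
        have : min c 1 * I (1/2) ≤ c * I (1/2) :=
          mul_le_mul_of_nonneg_right (min_le_left c 1) (by linarith)
        linarith
      have hpos : 0 < min c 1 * I (1/2) :=
        mul_pos hcmin (lt_of_lt_of_le one_pos hI12)
      have hll := Real.log_le_log hpos hprod
      rw [Real.log_mul (ne_of_gt hcmin) (by linarith)] at hll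
      exact hll
  have hfin : Real.log (I (1/2)) ≤ (A + B * Real.log 2 * 4 + δ) / θ
      - Real.log (min c 1) := by linarith
  calc I (1/2) = Real.exp (Real.log (I (1/2))) :=
        (Real.exp_log (by linarith : (0:ℝ) < I (1/2))).symm
    _ ≤ _ := Real.exp_le_exp.mpr hfin
end
end
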